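/- For every natural number n ≥ 1, the squarefree part of n² + 2 is not equal to the squarefree part of n² + 4; equivalently, (n² + 2)(n² + 4) is not a perfect square times a square of a rational, so ℚ(√(n²+2)) ≠ ℚ(√(n²+4)). -/

import Mathlib

/-! Subtracting the two equations gives `s * (k₂² - k₁²) = 2`, but two distinct squares
`k₁² < k₂²` with `k₁ ≥ 1` differ by at least `2 * k₁ + 1 ≥ 3`. -/

theorem Nat.two_mul_add_one_le_of_mul_sq_add_eq {s a b d : ℕ} (h : s * a ^ 2 + d = s * b ^ 2)
    (hd : 0 < d) : 2 * a + 1 ≤ d := by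
  have hs : 0 < s := Nat.pos_of_ne_zero fun hs ↦ by simp [hs] at h; omega
  have hab : a + 1 ≤ b := by
    by_contra! hba
    have := Nat.mul_le_mul_left s (Nat.pow_le_pow_left (Nat.le_of_lt_succ hba) 2)
    omega
  have hsq : s * (a + 1) ^ 2 ≤ s * b ^ 2 := Nat.mul_le_mul_left s (Nat.pow_le_pow_left hab 2)
  nlinarith

theorem stmt_0_general (n : ℕ) :
    ¬ ∃ s k₁ k₂ : ℕ, Squarefree s ∧ n ^ 2 + 2 = s * k₁ ^ 2 ∧ n ^ 2 + 4 = s * k₂ ^ 2 := by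
  rintro ⟨s, k₁, k₂, -, h₁, h₂⟩
  have hk₁ : 0 < k₁ := Nat.pos_of_ne_zero fun hk ↦ by simp [hk] at h₁
  have := Nat.two_mul_add_one_le_of_mul_sq_add_eq (d := 2) (by omega : s * k₁ ^ 2 + 2 = s * k₂ ^ 2)
    two_pos
  omega

/-- The squarefree parts of `n² + 2` and `n² + 4` differ: there is no squarefree
natural number `s` such that both `n² + 2` and `n² + 4` equal `s` times a perfect
square. -/
theorem stmt_0 (n : ℕ) (hn : 1 ≤ n) :
    ¬ ∃ s k₁ k₂ : ℕ, Squarefree s ∧ n ^ 2 + 2 = s * k₁ ^ 2 ∧ n ^ 2 + 4 = s * k₂ ^ 2 :=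
  stmt_0_general n
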